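/- Let A, B, Y be nonempty finite types, k ≥ 2 an integer, (P^y)_{y∈Y} a POVM on A⊗B, and (G^v)_{v∈Y^k} a POVM on A⊗B^{⊗k} witnessing that (P^y) is k-extendible, i.e., satisfying: (i) for every y∈Y, Σ_{(y_2,…,y_k)} G^{(y,y_2,…,y_k)} = P^y ⊗ I_{B^{⊗(k−1)}}; (ii) for every (y_1,…,y_{k−1}), Σ_{y_k} Tr_A[G^{(y_1,…,y_k)}] = (1/|B|) Σ_{y_k} Tr_{A,B_k}[G^{(y_1,…,y_k)}] ⊗ I_{B_k}; (iii) permutation covariance under every permutation π of the k B-factors. Define the Choi state Φ^G on A⊗B^{⊗k}⊗Y^{⊗k} as the matrix with entries Φ^G((a,f,u),(a',f',u')) = δ_{u,u'}·(1/(|A|·|B|^k))·G^u((a',f'),(a,f)), and similarly Φ^P on A⊗B⊗Y with entries Φ^P((a,b,y),(a',b',y')) = δ_{y,y'}·(1/(|A|·|B|))·P^y((a',b'),(a,b)). Then: (A6) the partial trace of Φ^G over the Y-factors 2 through k equals Φ^P ⊗ I_{B^{⊗(k−1)}}/|B|^{k−1} (with Φ^P on A, the first B-factor and the first Y-factor);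 (A7) Tr_{A,Y_k}[Φ^G] = Tr_{A,B_k,Y_k}[Φ^G] ⊗ I_{B_k}/|B|; (A8) Φ^G is invariant under simultaneous conjugation by the permutation unitaries permuting the k B-factors and the k Y-factors by the same permutation; and (A9) the partial trace of Φ^G over all B- and Y-factors equals I_A/|A|. -/

import Mathlib

open Matrix Kronecker ComplexOrder

/-- Properties (A6)–(A9) of the Choi state `Φ^G` of the measurement channel associated
with a `k`-extension `(G^v)` of a POVM `(P^y)`. -/
theorem choi_state_of_k_extension
    (A B Y : Type) [Fintype A] [DecidableEq A] [Nonempty A]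
    [Fintype B] [DecidableEq B] [Nonempty B]
    [Fintype Y] [DecidableEq Y] [Nonempty Y]
    (k : ℕ) (hk : 2 ≤ k)
    (P : Y → Matrix (A × B) (A × B) ℂ)
    (hPpos : ∀ y, (P y).PosSemidef) (hPsum : ∑ y, P y = 1)
    (G : (Fin k → Y) → Matrix (A × (Fin k → B)) (A × (Fin k → B)) ℂ)
    (hGpos : ∀ v, (G v).PosSemidef) (hGsum : ∑ v : Fin k → Y, G v = 1)
    -- (i) marginal condition
    (hGmarg : ∀ y : Y,
        ∑ v ∈ Finset.univ.filter (fun v : Fin k → Y => v ⟨0, by omega⟩ = y), G v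
          = Matrix.of fun (p q : A × (Fin k → B)) =>
              P y (p.1, p.2 ⟨0, by omega⟩) (q.1, q.2 ⟨0, by omega⟩)
                * ∏ i ∈ Finset.univ.erase (⟨0, by omega⟩ : Fin k),
                    (if p.2 i = q.2 i then (1 : ℂ) else 0))
    -- (ii) non-signaling condition
    (hGnonsig : ∀ u : Fin k → Y, ∀ f f' : Fin k → B,
        (∑ yk : Y, ∑ a : A, G (Function.update u ⟨k - 1, by omega⟩ yk) (a, f) (a, f'))
          = (Fintype.card B : ℂ)⁻¹
            * (∑ yk : Y, ∑ a : A, ∑ b : B,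
                G (Function.update u ⟨k - 1, by omega⟩ yk)
                  (a, Function.update f ⟨k - 1, by omega⟩ b)
                  (a, Function.update f' ⟨k - 1, by omega⟩ b))
            * (if f ⟨k - 1, by omega⟩ = f' ⟨k - 1, by omega⟩ then 1 else 0))
    -- (iii) permutation covariance
    (hGperm : ∀ v : Fin k → Y, ∀ π : Equiv.Perm (Fin k),
        (Matrix.of fun (p q : A × (Fin k → B)) =>
          G (v ∘ π) (p.1, p.2 ∘ π) (q.1, q.2 ∘ π)) = G v)
    -- the Choi states of the measurement channels for G and P
    (ΦG : Matrix (A × (Fin k → B) × (Fin k → Y)) (A × (Fin k → B) × (Fin k → Y)) ℂ)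
    (hΦG : ΦG = Matrix.of fun (p q : A × (Fin k → B) × (Fin k → Y)) =>
        if p.2.2 = q.2.2 then
          ((Fintype.card A : ℂ) * (Fintype.card B : ℂ) ^ k)⁻¹
            * G p.2.2 (q.1, q.2.1) (p.1, p.2.1)
        else 0)
    (ΦP : Matrix (A × B × Y) (A × B × Y) ℂ)
    (hΦP : ΦP = Matrix.of fun (p q : A × B × Y) =>
        if p.2.2 = q.2.2 then
          ((Fintype.card A : ℂ) * (Fintype.card B : ℂ))⁻¹
            * P p.2.2 (q.1, q.2.1) (p.1, p.2.1)
        else 0) :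
    -- (A6): tracing Φ^G over the Y-factors 2,…,k gives Φ^P ⊗ I_{B^{⊗(k−1)}}/|B|^{k−1}
    (∀ (a a' : A) (f f' : Fin k → B) (y y' : Y),
        ∑ u ∈ Finset.univ.filter (fun u : Fin k → Y => u ⟨0, by omega⟩ = y),
            ΦG (a, f, u) (a', f', Function.update u ⟨0, by omega⟩ y')
          = ΦP (a, f ⟨0, by omega⟩, y) (a', f' ⟨0, by omega⟩, y')
            * (∏ j ∈ Finset.univ.erase (⟨0, by omega⟩ : Fin k),
                (if f j = f' j then (1 : ℂ) else 0))
            * ((Fintype.card B : ℂ) ^ (k - 1))⁻¹)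
    -- (A7): Tr_{A,Y_k}[Φ^G] = Tr_{A,B_k,Y_k}[Φ^G] ⊗ I_{B_k}/|B|
    ∧ (∀ (f f' : Fin k → B) (u u' : Fin k → Y),
        (∑ yk : Y, ∑ a : A,
            ΦG (a, f, Function.update u ⟨k - 1, by omega⟩ yk)
               (a, f', Function.update u' ⟨k - 1, by omega⟩ yk))
          = (Fintype.card B : ℂ)⁻¹
            * (∑ yk : Y, ∑ a : A, ∑ b : B,
                ΦG (a, Function.update f ⟨k - 1, by omega⟩ b,
                      Function.update u ⟨k - 1, by omega⟩ yk)
                   (a, Function.update f' ⟨k - 1, by omega⟩ b,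
                      Function.update u' ⟨k - 1, by omega⟩ yk))
            * (if f ⟨k - 1, by omega⟩ = f' ⟨k - 1, by omega⟩ then 1 else 0))
    -- (A8): invariance under simultaneous permutations of the B- and Y-factors
    ∧ (∀ π : Equiv.Perm (Fin k), ∀ (a a' : A) (f f' : Fin k → B) (u u' : Fin k → Y),
        ΦG (a, f ∘ π, u ∘ π) (a', f' ∘ π, u' ∘ π) = ΦG (a, f, u) (a', f', u'))
    -- (A9): the marginal on A is maximally mixed
    ∧ (∀ a a' : A,
        ∑ f : Fin k → B, ∑ u : Fin k → Y, ΦG (a, f, u) (a', f, u)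
          = (Fintype.card A : ℂ)⁻¹ * (if a = a' then 1 else 0)) := by
  subst hΦG hΦP
  have hB : (Fintype.card B : ℂ) ≠ 0 := by
    exact_mod_cast (Nat.cast_ne_zero (R := ℂ)).2 Fintype.card_ne_zero
  have hA : (Fintype.card A : ℂ) ≠ 0 := by
    exact_mod_cast (Nat.cast_ne_zero (R := ℂ)).2 Fintype.card_ne_zero
  set i0 : Fin k := ⟨0, by omega⟩ with hi0
  set ik : Fin k := ⟨k - 1, by omega⟩ with hik
  refine ⟨?_, ?_, ?_, ?_⟩
  · -- (A6)
    intro a a' f f' y y'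
    simp only [Matrix.of_apply]
    by_cases hyy : y = y'
    · subst hyy
      have key : ∀ u ∈ Finset.univ.filter (fun u : Fin k → Y => u i0 = y),
          (if u = Function.update u i0 y then
              ((Fintype.card A : ℂ) * (Fintype.card B : ℂ) ^ k)⁻¹
                * G u (a', f') (a, f) else 0)
            = ((Fintype.card A : ℂ) * (Fintype.card B : ℂ) ^ k)⁻¹
                * G u (a', f') (a, f) := by
        intro u hu
        rw [Finset.mem_filter] at hu
        rw [if_pos]
        rw [← hu.2, Function.update_eq_self]
      rw [Finset.sum_congr rfl key, ← Finset.mul_sum]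
      have hmarg := congrFun (congrFun (hGmarg y) (a', f')) (a, f)
      simp only [Matrix.sum_apply] at hmarg ⊢
      rw [hmarg]
      simp only [Matrix.of_apply, eq_self_iff_true, if_true]
      have hpow : (Fintype.card B : ℂ) ^ k
          = (Fintype.card B : ℂ) ^ (k - 1) * (Fintype.card B : ℂ) := by
        rw [← pow_succ]; congr 1; omega
      have hprod : (∏ j ∈ Finset.univ.erase i0, (if f' j = f j then (1 : ℂ) else 0))
          = ∏ j ∈ Finset.univ.erase i0, (if f j = f' j then (1 : ℂ) else 0) := by
        apply Finset.prod_congr rfl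
        intro j _
        simp [eq_comm]
      have hc : ((Fintype.card A : ℂ) * (Fintype.card B : ℂ) ^ k)⁻¹
          = ((Fintype.card A : ℂ) * (Fintype.card B : ℂ))⁻¹
            * ((Fintype.card B : ℂ) ^ (k - 1))⁻¹ := by
        rw [hpow, mul_inv, mul_inv, mul_inv]; ring
      rw [hprod, hc]
      ring
    · have key : ∀ u ∈ Finset.univ.filter (fun u : Fin k → Y => u i0 = y),
          (if u = Function.update u i0 y' then
              ((Fintype.card A : ℂ) * (Fintype.card B : ℂ) ^ k)⁻¹
                * G u (a', f') (a, f) else 0) = 0 := by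
        intro u hu
        rw [Finset.mem_filter] at hu
        rw [if_neg]
        intro h
        apply hyy
        rw [← hu.2, h, Function.update_self]
      rw [Finset.sum_congr rfl key, Finset.sum_const, smul_zero]
      rw [if_neg hyy]
      ring
  · -- (A7)
    intro f f' u u'
    simp only [Matrix.of_apply]
    by_cases huu : ∀ j : Fin k, j ≠ ik → u j = u' j
    · have hupd : ∀ yk : Y, Function.update u ik yk = Function.update u' ik yk := by
        intro yk
        funext j
        by_cases hj : j = ik
        · subst hj; simp
        · simp [Function.update_of_ne hj, huu j hj]
      simp only [hupd, eq_self_iff_true, if_true]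
      have L : (∑ yk : Y, ∑ a : A,
          ((Fintype.card A : ℂ) * (Fintype.card B : ℂ) ^ k)⁻¹
            * G (Function.update u' ik yk) (a, f') (a, f))
          = ((Fintype.card A : ℂ) * (Fintype.card B : ℂ) ^ k)⁻¹
            * ∑ yk : Y, ∑ a : A, G (Function.update u' ik yk) (a, f') (a, f) := by
        simp [Finset.mul_sum]
      rw [L, hGnonsig u' f' f]
      have R : (∑ yk : Y, ∑ a : A, ∑ b : B,
          ((Fintype.card A : ℂ) * (Fintype.card B : ℂ) ^ k)⁻¹
            * G (Function.update u' ik yk)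
                (a, Function.update f' ik b) (a, Function.update f ik b))
          = ((Fintype.card A : ℂ) * (Fintype.card B : ℂ) ^ k)⁻¹
            * ∑ yk : Y, ∑ a : A, ∑ b : B,
                G (Function.update u' ik yk)
                  (a, Function.update f' ik b) (a, Function.update f ik b) := by
        simp [Finset.mul_sum]
      rw [R]
      have hδ : (if f' ik = f ik then (1:ℂ) else 0) = (if f ik = f' ik then (1:ℂ) else 0) := by
        simp [eq_comm]
      rw [hδ]
      ring
    · push_neg at huu
      obtain ⟨j, hj, hne⟩ := huu
      have hupd : ∀ yk : Y, Function.update u ik yk ≠ Function.update u' ik yk := by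
        intro yk h
        apply hne
        have := congrFun h j
        rwa [Function.update_of_ne hj, Function.update_of_ne hj] at this
      simp only [hupd, if_false, Finset.sum_const_zero, mul_zero, zero_mul]
  · -- (A8)
    intro π a a' f f' u u'
    simp only [Matrix.of_apply]
    have hcmp : (u ∘ π = u' ∘ π) ↔ u = u' := by
      constructor
      · intro h
        funext j
        have := congrFun h (π.symm j)
        simpa using this
      · intro h; rw [h]
    by_cases h : u = u'
    · subst h
      rw [if_pos rfl, if_pos rfl]
      have h2 := congrFun (congrFun (hGperm u π) (a', f')) (a, f)
      simp only [Matrix.of_apply] at h2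
      rw [h2]
    · rw [if_neg (fun hc => h (hcmp.1 hc)), if_neg h]
  · -- (A9)
    intro a a'
    simp only [Matrix.of_apply, eq_self_iff_true, if_true]
    have L : ∀ f : Fin k → B, (∑ u : Fin k → Y,
        ((Fintype.card A : ℂ) * (Fintype.card B : ℂ) ^ k)⁻¹ * G u (a', f) (a, f))
        = ((Fintype.card A : ℂ) * (Fintype.card B : ℂ) ^ k)⁻¹
            * (if a' = a then (1:ℂ) else 0) := by
      intro f
      rw [← Finset.mul_sum]
      congr 1
      have := congrFun (congrFun hGsum (a', f)) (a, f)
      simp only [Matrix.sum_apply] at this ⊢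
      rw [this]
      simp [Matrix.one_apply, Prod.ext_iff]
    simp only [L]
    rw [Finset.sum_const, Finset.card_univ]
    have hcard : (Fintype.card (Fin k → B) : ℂ) = (Fintype.card B : ℂ) ^ k := by
      simp [Fintype.card_fun]
    have hδ : (if a' = a then (1:ℂ) else 0) = (if a = a' then (1:ℂ) else 0) := by
      simp [eq_comm]
    rw [nsmul_eq_mul, hcard, hδ]
    field_simp
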